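/- Let J be skew-symmetric, R positive definite with [J − R]_{ij} ≥ 0 for all i ≠ j, and Q a positive definite diagonal matrix. Then X = (J − R)Q is a Hurwitz Metzler matrix. -/

import Mathlib

/-!
For real `c`, skew-symmetry of `J` gives `cᵀ (J - R) c = -cᵀ R c < 0`, and splitting a complex
vector into real and imaginary parts extends this to `Re (u* (J - R) u) < 0` for `u ≠ 0`.
If `(J - R) D v = μ v` with `D = diagonal d`, take `u = D v`: then `u* (J - R) u = μ (v* D v)`
with `v* D v > 0`, so `Re μ < 0`.
-/

open Matrix

namespace Matrix

variable {ι : Type*} [Fintype ι]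

theorem exists_mulVec_eq_smul_of_mem_spectrum {K : Type*} [Field K] [DecidableEq ι]
    {A : Matrix ι ι K} {μ : K} (hμ : μ ∈ spectrum K A) : ∃ v ≠ 0, A *ᵥ v = μ • v := by
  rw [← spectrum_toLin', ← Module.End.hasEigenvalue_iff_mem_spectrum] at hμ
  obtain ⟨v, hv⟩ := hμ.exists_hasEigenvector
  exact ⟨v, hv.2, hv.apply_eq_smul⟩

theorem dotProduct_mulVec_self_eq_zero_of_transpose_eq_neg {R : Type*} [CommRing R]
    [NoZeroDivisors R] [CharZero R] {J : Matrix ι ι R} (hJ : Jᵀ = -J) (c : ι → R) :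
    c ⬝ᵥ J *ᵥ c = 0 := by
  have h : c ⬝ᵥ Jᵀ *ᵥ c = c ⬝ᵥ J *ᵥ c := by
    rw [dotProduct_comm, mulVec_transpose, ← dotProduct_mulVec]
  rwa [hJ, neg_mulVec, dotProduct_neg, CharZero.neg_eq_self_iff] at h

theorem re_star_dotProduct_map_ofReal_mulVec (M : Matrix ι ι ℝ) (u : ι → ℂ) :
    (star u ⬝ᵥ M.map Complex.ofReal *ᵥ u).re
      = (fun i => (u i).re) ⬝ᵥ M *ᵥ (fun i => (u i).re)
        + (fun i => (u i).im) ⬝ᵥ M *ᵥ (fun i => (u i).im) := by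
  simp only [dotProduct, mulVec, Finset.mul_sum, Complex.re_sum, ← Finset.sum_add_distrib]
  refine Finset.sum_congr rfl fun i _ => Finset.sum_congr rfl fun j _ => ?_
  simp only [Pi.star_apply, map_apply, Complex.star_def, Complex.mul_re, Complex.conj_re,
    Complex.conj_im, Complex.ofReal_re, Complex.ofReal_im, Complex.mul_im]
  ring

theorem re_star_dotProduct_map_ofReal_mulVec_neg {M : Matrix ι ι ℝ}
    (hM : ∀ c ≠ 0, c ⬝ᵥ M *ᵥ c < 0) {u : ι → ℂ} (hu : u ≠ 0) :
    (star u ⬝ᵥ M.map Complex.ofReal *ᵥ u).re < 0 := by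
  have hM' : ∀ c, c ⬝ᵥ M *ᵥ c ≤ 0 := fun c => by
    rcases eq_or_ne c 0 with rfl | hc
    · simp
    · exact (hM c hc).le
  have : (fun i => (u i).re) ≠ 0 ∨ (fun i => (u i).im) ≠ 0 := by
    by_contra! h
    exact hu (funext fun i => Complex.ext (congrFun h.1 i) (congrFun h.2 i))
  rw [re_star_dotProduct_map_ofReal_mulVec]
  rcases this with h | h
  · exact add_neg_of_neg_of_nonpos (hM _ h) (hM' _)
  · exact add_neg_of_nonpos_of_neg (hM' _) (hM _ h)

theorem map_ofReal_mul_diagonal [DecidableEq ι] (M : Matrix ι ι ℝ) (d : ι → ℝ) :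
    (M * diagonal d).map Complex.ofReal =
      M.map Complex.ofReal * diagonal (fun i => (d i : ℂ)) := by
  rw [show Complex.ofReal = Complex.ofRealHom from rfl, Matrix.map_mul,
    diagonal_map (map_zero _)]

open scoped ComplexOrder in
theorem re_lt_zero_of_mem_spectrum_mul_diagonal [DecidableEq ι] {M : Matrix ι ι ℝ}
    (hM : ∀ c ≠ 0, c ⬝ᵥ M *ᵥ c < 0) {d : ι → ℝ} (hd : ∀ i, 0 < d i) {μ : ℂ}
    (hμ : μ ∈ spectrum ℂ ((M * diagonal d).map Complex.ofReal)) : μ.re < 0 := by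
  obtain ⟨v, hv, hMv⟩ := exists_mulVec_eq_smul_of_mem_spectrum hμ
  set D := diagonal (fun i => (d i : ℂ))
  set u := D *ᵥ v
  have hMu : M.map Complex.ofReal *ᵥ u = μ • v := by
    rw [mulVec_mulVec, ← map_ofReal_mul_diagonal, hMv]
  have hD : D.PosDef := PosDef.diagonal fun i => by simpa using hd i
  have huv : 0 < star u ⬝ᵥ v := by
    have := hD.dotProduct_mulVec_pos hv
    rwa [dotProduct_mulVec, ← hD.1.eq, ← star_mulVec] at this
  have hu : u ≠ 0 := by
    rintro h
    simp only [h, star_zero, zero_dotProduct, lt_self_iff_false] at huv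
  obtain ⟨hq, him⟩ := Complex.pos_iff.mp huv
  have hre := re_star_dotProduct_map_ofReal_mulVec_neg hM hu
  rw [hMu, dotProduct_smul, smul_eq_mul, Complex.mul_re, ← him, mul_zero, sub_zero] at hre
  exact neg_of_mul_neg_left hre hq.le

end Matrix

/-- If J is skew-symmetric, R ≻ 0, [J − R]_{ij} ≥ 0 for i ≠ j, and Q is a positive
definite diagonal matrix, then X = (J − R)Q is a Hurwitz Metzler matrix. -/
theorem dh_metzler_hurwitz {n : ℕ} (J R : Matrix (Fin n) (Fin n) ℝ)
    (hJ : Jᵀ = -J) (hR : R.PosDef)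
    (hoff : ∀ i j, i ≠ j → 0 ≤ (J - R) i j)
    (d : Fin n → ℝ) (hd : ∀ i, 0 < d i) :
    (∀ i j, i ≠ j → 0 ≤ ((J - R) * Matrix.diagonal d) i j) ∧
    (∀ μ ∈ spectrum ℂ (((J - R) * Matrix.diagonal d).map (Complex.ofReal ·)),
      μ.re < 0) := by
  refine ⟨fun i j hij => ?_, fun μ => re_lt_zero_of_mem_spectrum_mul_diagonal ?_ hd⟩
  · rw [mul_diagonal]
    exact mul_nonneg (hoff i j hij) (hd j).le
  · intro c hc
    rw [sub_mulVec, dotProduct_sub, dotProduct_mulVec_self_eq_zero_of_transpose_eq_neg hJ,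
      zero_sub, neg_lt_zero]
    simpa using hR.dotProduct_mulVec_pos hc
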